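/- Let p > 3, ξ ∈ ℝ, r > 0, and set y = √(1 − x²) (taking r = 1). Then the function f(x) = |x+y+ξ|^p + |x+y−ξ|^p + |y−x+ξ|^p + |y−x−ξ|^p is strictly increasing on the interval (0, 1/√2), assuming ξ ≥ 0. -/

import Mathlib

open Set

/-!
Write `y = √(1 - x²)`, `u = x + y`, `v = y - x` and `G t = |t + ξ|^p + |t - ξ|^p`, so that the
function is `G u + G v`. Since `u' = v / y` and `v' = -u / y`, its derivative is
`(u v / y) (G'(u) / u - G'(v) / v)`, positive because `u > v > 0` as soon as `G'(t) / t` is strictly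
increasing on `(0, ∞)`. Here `G' = p k` with `k t = |t + ξ|^q (t + ξ) + |t - ξ|^q (t - ξ)`,
`q = p - 2 > 1`, and `(k t / t)'` has the sign of
`t k'(t) - k(t) = (t + ξ)^q (q t - ξ) + |t - ξ|^q (q t + ξ)`. This is clearly positive for `t ≥ ξ`;
for `0 < t < ξ` it is the inequality `(ξ + t)^q (ξ - q t) < (ξ - t)^q (ξ + q t)`, an equality at
`t = 0` whose two sides differ by a function with derivative
`q (q + 1) t ((ξ + t)^(q - 1) - (ξ - t)^(q - 1)) > 0`.
-/

theorem abs_rpow_sub_two_mul_self_mul_self {q : ℝ} (hq : q ≠ 0) (s : ℝ) :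
    |s| ^ (q - 2) * s * s = |s| ^ q := by
  rcases eq_or_ne s 0 with rfl | hs
  · simp [Real.zero_rpow hq]
  · rw [mul_assoc, ← abs_mul_abs_self, ← sq, ← Real.rpow_natCast,
      ← Real.rpow_add (abs_pos.mpr hs)]
    norm_num

theorem hasDerivAt_abs_rpow_mul_self {q : ℝ} (hq : 1 < q) (s : ℝ) :
    HasDerivAt (fun s : ℝ => |s| ^ q * s) ((q + 1) * |s| ^ q) s := by
  refine ((hasDerivAt_abs_rpow s hq).mul (hasDerivAt_id s)).congr_deriv ?_
  simp only [id]
  linear_combination q * abs_rpow_sub_two_mul_self_mul_self (by linarith : q ≠ 0) s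

noncomputable def signedPowSum (q ξ t : ℝ) : ℝ :=
  |t + ξ| ^ q * (t + ξ) + |t - ξ| ^ q * (t - ξ)

theorem hasDerivAt_signedPowSum {q : ℝ} (hq : 1 < q) (ξ t : ℝ) :
    HasDerivAt (signedPowSum q ξ) ((q + 1) * (|t + ξ| ^ q + |t - ξ| ^ q)) t := by
  have hplus := (hasDerivAt_abs_rpow_mul_self hq (t + ξ)).comp t ((hasDerivAt_id t).add_const ξ)
  have hminus := (hasDerivAt_abs_rpow_mul_self hq (t - ξ)).comp t ((hasDerivAt_id t).sub_const ξ)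
  exact (hplus.add hminus).congr_deriv (by simp only [mul_one]; ring)

theorem strictMonoOn_div_self_of_lt_mul_deriv {k k' : ℝ → ℝ}
    (hk : ∀ t, 0 < t → HasDerivAt k (k' t) t) (hlt : ∀ t, 0 < t → k t < t * k' t) :
    StrictMonoOn (fun t => k t / t) (Ioi 0) := by
  have hquot : ∀ t, 0 < t → HasDerivAt (fun t => k t / t) ((k' t * t - k t * 1) / t ^ 2) t :=
    fun t ht => (hk t ht).div (hasDerivAt_id t) ht.ne'
  refine strictMonoOn_of_deriv_pos (convex_Ioi 0)
    (fun t ht => (hquot t ht).continuousAt.continuousWithinAt) fun t ht => ?_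
  rw [interior_Ioi] at ht
  rw [(hquot t ht).deriv]
  have := hlt t ht
  exact div_pos (by linarith) (pow_pos ht 2)

theorem add_rpow_mul_sub_lt_sub_rpow_mul_add {q ξ t : ℝ} (hq : 1 < q) (ht : 0 < t)
    (htξ : t < ξ) : (ξ + t) ^ q * (ξ - q * t) < (ξ - t) ^ q * (ξ + q * t) := by
  set h : ℝ → ℝ := fun s => (ξ + s) ^ q * (ξ - q * s)
  set h' : ℝ → ℝ := fun s => q * (ξ + s) ^ (q - 1) * (ξ - q * s) - q * (ξ + s) ^ q
  have hh : ∀ s, HasDerivAt h (h' s) s := fun s =>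
    (((Real.hasDerivAt_rpow_const (Or.inr hq.le)).comp s ((hasDerivAt_id s).const_add ξ)).mul
      (((hasDerivAt_id s).const_mul q).const_sub ξ)).congr_deriv
      (by simp only [h', Function.comp_apply, id]; ring)
  have hF : ∀ s, HasDerivAt (fun s => h (-s) - h s) (-h' (-s) - h' s) s := fun s =>
    (((hh (-s)).comp s (hasDerivAt_neg s)).sub (hh s)).congr_deriv (by ring)
  have hF_pos : ∀ s ∈ Ioo 0 ξ, 0 < -h' (-s) - h' s := by
    rintro s ⟨hs0, hsξ⟩
    have hplus : (ξ + s) ^ q = (ξ + s) ^ (q - 1) * (ξ + s) := by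
      rw [← Real.rpow_add_one (by linarith), sub_add_cancel]
    have hminus : (ξ + -s) ^ q = (ξ + -s) ^ (q - 1) * (ξ + -s) := by
      rw [← Real.rpow_add_one (by linarith), sub_add_cancel]
    have hlt : (ξ + -s) ^ (q - 1) < (ξ + s) ^ (q - 1) :=
      Real.rpow_lt_rpow (by linarith) (by linarith) (by linarith)
    simp only [h', hplus, hminus]
    nlinarith [mul_pos (mul_pos (by linarith : 0 < q) hs0) (sub_pos.mpr hlt)]
  have hmono : StrictMonoOn (fun s => h (-s) - h s) (Icc 0 ξ) :=
    strictMonoOn_of_deriv_pos (convex_Icc 0 ξ)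
      (fun s _ => (hF s).continuousAt.continuousWithinAt)
      (fun s hs => by rw [(hF s).deriv]; exact hF_pos s (by rwa [interior_Icc] at hs))
  have := hmono ⟨le_rfl, (ht.trans htξ).le⟩ ⟨ht.le, htξ.le⟩ ht
  simp only [h, neg_zero, sub_self, mul_neg, sub_neg_eq_add, ← sub_eq_add_neg] at this
  linarith

theorem signedPowSum_lt_mul_deriv {q ξ t : ℝ} (hq : 1 < q) (hξ : 0 ≤ ξ) (ht : 0 < t) :
    signedPowSum q ξ t < t * ((q + 1) * (|t + ξ| ^ q + |t - ξ| ^ q)) := by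
  suffices 0 < (t + ξ) ^ q * (q * t - ξ) + |t - ξ| ^ q * (q * t + ξ) by
    rw [signedPowSum, abs_of_pos (by linarith : 0 < t + ξ)]
    linarith
  rcases le_or_gt ξ t with hle | hlt
  · have hpos : 0 < (t + ξ) ^ q * (q * t - ξ) :=
      mul_pos (Real.rpow_pos_of_pos (by linarith) q) (by nlinarith)
    have := mul_nonneg (Real.rpow_nonneg (abs_nonneg (t - ξ)) q) (by nlinarith : 0 ≤ q * t + ξ)
    linarith
  · have := add_rpow_mul_sub_lt_sub_rpow_mul_add hq ht hlt
    rw [abs_sub_comm, abs_of_pos (by linarith : 0 < ξ - t), add_comm t ξ]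
    linarith

theorem strictMonoOn_signedPowSum_div_self {q ξ : ℝ} (hq : 1 < q) (hξ : 0 ≤ ξ) :
    StrictMonoOn (fun t => signedPowSum q ξ t / t) (Ioi 0) :=
  strictMonoOn_div_self_of_lt_mul_deriv (fun t _ => hasDerivAt_signedPowSum hq ξ t)
    fun _ ht => signedPowSum_lt_mul_deriv hq hξ ht

theorem hasDerivAt_abs_add_rpow_add_abs_sub_rpow {p : ℝ} (hp : 1 < p) (ξ t : ℝ) :
    HasDerivAt (fun t => |t + ξ| ^ p + |t - ξ| ^ p) (p * signedPowSum (p - 2) ξ t) t := by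
  refine (((hasDerivAt_abs_rpow (t + ξ) hp).comp t ((hasDerivAt_id t).add_const ξ)).add
    ((hasDerivAt_abs_rpow (t - ξ) hp).comp t ((hasDerivAt_id t).sub_const ξ))).congr_deriv ?_
  simp only [signedPowSum, mul_one]
  ring

theorem lt_sqrt_one_sub_sq {x : ℝ} (hx : x ∈ Ioo 0 (1 / √2)) : x < √(1 - x ^ 2) := by
  obtain ⟨hx0, hx1⟩ := hx
  rw [lt_div_iff₀ (by positivity)] at hx1
  rw [Real.lt_sqrt hx0.le]
  nlinarith [Real.sq_sqrt (zero_le_two : (0 : ℝ) ≤ 2), mul_pos hx0 (Real.sqrt_pos.mpr two_pos)]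

theorem hasDerivAt_sqrt_one_sub_sq {x : ℝ} (hx : 1 - x ^ 2 ≠ 0) :
    HasDerivAt (fun x => √(1 - x ^ 2)) (-x / √(1 - x ^ 2)) x := by
  refine (((hasDerivAt_pow 2 x).const_sub 1).sqrt hx).congr_deriv ?_
  rcases eq_or_ne √(1 - x ^ 2) 0 with h | h
  · simp [h]
  · field_simp
    ring

theorem strictMonoOn_add_sqrt_one_sub_sq {G G' : ℝ → ℝ}
    (hG : ∀ t, 0 < t → HasDerivAt G (G' t) t) (hG' : StrictMonoOn (fun t => G' t / t) (Ioi 0)) :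
    StrictMonoOn (fun x => G (x + √(1 - x ^ 2)) + G (√(1 - x ^ 2) - x)) (Ioo 0 (1 / √2)) := by
  have hf : ∀ x ∈ Ioo 0 (1 / √2), HasDerivAt (fun x => G (x + √(1 - x ^ 2)) + G (√(1 - x ^ 2) - x))
      (G' (x + √(1 - x ^ 2)) * (1 + -x / √(1 - x ^ 2)) +
        G' (√(1 - x ^ 2) - x) * (-x / √(1 - x ^ 2) - 1)) x := by
    intro x hx
    have hxy := lt_sqrt_one_sub_sq hx
    have hy := hasDerivAt_sqrt_one_sub_sq (Real.sqrt_pos.mp (hx.1.trans hxy)).ne'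
    have hu : HasDerivAt (fun x => x + √(1 - x ^ 2)) (1 + -x / √(1 - x ^ 2)) x :=
      (hasDerivAt_id x).add hy
    have hv : HasDerivAt (fun x => √(1 - x ^ 2) - x) (-x / √(1 - x ^ 2) - 1) x :=
      hy.sub (hasDerivAt_id x)
    exact ((hG _ (by linarith [hx.1])).comp x hu).add ((hG _ (by linarith)).comp x hv)
  refine strictMonoOn_of_deriv_pos (convex_Ioo 0 (1 / √2))
    (fun x hx => (hf x hx).continuousAt.continuousWithinAt) fun x hx => ?_
  rw [interior_Ioo] at hx
  rw [(hf x hx).deriv]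
  have hx0 := hx.1
  have hxy := lt_sqrt_one_sub_sq hx
  set y := √(1 - x ^ 2)
  have hy0 : 0 < y := hx0.trans hxy
  have key : G' (x + y) * (1 + -x / y) + G' (y - x) * (-x / y - 1) =
      (x + y) * (y - x) / y * (G' (x + y) / (x + y) - G' (y - x) / (y - x)) := by
    have : y - x ≠ 0 := by linarith
    have : x + y ≠ 0 := by linarith
    field_simp
    ring
  rw [key]
  exact mul_pos (by positivity) (sub_pos.mpr (hG' (show 0 < y - x by linarith)
    (show 0 < x + y by linarith) (by linarith)))

/-- For `p > 3`, `ξ ≥ 0` and `y = √(1 - x²)`, the function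
`f(x) = |x+y+ξ|^p + |x+y-ξ|^p + |y-x+ξ|^p + |y-x-ξ|^p` is strictly increasing
on `(0, 1/√2)`. -/
theorem stmt_3 (p ξ : ℝ) (hp : 3 < p) (hξ : 0 ≤ ξ) :
    StrictMonoOn
      (fun x : ℝ =>
        |x + Real.sqrt (1 - x ^ 2) + ξ| ^ p + |x + Real.sqrt (1 - x ^ 2) - ξ| ^ p +
          |Real.sqrt (1 - x ^ 2) - x + ξ| ^ p + |Real.sqrt (1 - x ^ 2) - x - ξ| ^ p)
      (Set.Ioo 0 (1 / Real.sqrt 2)) := by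
  have hq : 1 < p - 2 := by linarith
  have hG' : StrictMonoOn (fun t => p * signedPowSum (p - 2) ξ t / t) (Ioi 0) := by
    intro a ha b hb hab
    simp only [mul_div_assoc]
    exact mul_lt_mul_of_pos_left (strictMonoOn_signedPowSum_div_self hq hξ ha hb hab)
      (by linarith)
  convert strictMonoOn_add_sqrt_one_sub_sq
    (fun t _ => hasDerivAt_abs_add_rpow_add_abs_sub_rpow (by linarith) ξ t) hG' using 2 with x
  ring
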